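/- Let d_0 ≤ d/2 be positive integers. There exists a subset V ⊆ {v ∈ {0,1}^d : ∑_j v_j = d_0} and a constant C_0 > 0 (independent of d, d_0) such that log|V| ≥ C_0 · d_0 · log(d/d_0) and the Hamming distance between any two distinct elements of V is at least C_0 · d_0. -/

import Mathlib

open Finset

lemma vg_div {q : ℕ} (i : ℕ) (x : Fin q) : (i * q + (x:ℕ)) / q = i := by
  have hq : 0 < q := x.pos
  rw [add_comm, Nat.add_mul_div_right _ _ hq, Nat.div_eq_of_lt x.is_lt, Nat.zero_add]

def vgEmb (d n q : ℕ) (c : Fin n → Fin q) : Fin d → Bool :=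
  fun j => decide (∃ i : Fin n, (j : ℕ) = i * q + (c i : ℕ))

lemma vgEmb_true_iff {d n q : ℕ} (c : Fin n → Fin q) (j : Fin d) :
    vgEmb d n q c j = true ↔ ∃ i : Fin n, (j : ℕ) = i * q + (c i : ℕ) := by
  simp [vgEmb]

lemma vg_lt {d n q : ℕ} (h : n * q ≤ d) (i : Fin n) (x : Fin q) :
    (i : ℕ) * q + (x : ℕ) < d := by
  calc (i:ℕ) * q + (x:ℕ) < (i:ℕ) * q + q := by omega
  _ = ((i:ℕ)+1) * q := by ring
  _ ≤ n * q := Nat.mul_le_mul_right _ (by omega)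
  _ ≤ d := h

lemma vg_weight {d n q : ℕ} (h : n * q ≤ d) (c : Fin n → Fin q) :
    (Finset.univ.filter fun j => vgEmb d n q c j = true).card = n := by
  have : (Finset.univ.filter fun j => vgEmb d n q c j = true)
      = Finset.univ.image (fun i : Fin n => (⟨(i:ℕ)*q + (c i : ℕ), vg_lt h i (c i)⟩ : Fin d)) := by
    ext j
    simp only [mem_filter, mem_univ, true_and, mem_image, vgEmb_true_iff]
    constructor
    · rintro ⟨i, hi⟩; exact ⟨i, by ext; simp [hi]⟩
    · rintro ⟨i, hi⟩; exact ⟨i, by rw [← hi]⟩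
  rw [this, Finset.card_image_of_injective _ ?_, Finset.card_univ, Fintype.card_fin]
  intro i i' hii
  have h2 : (i:ℕ) * q + (c i : ℕ) = (i':ℕ) * q + (c i' : ℕ) := by
    simpa [Fin.ext_iff] using hii
  have := congrArg (· / q) h2
  simp only [vg_div] at this
  exact Fin.ext this

lemma vg_dist {d n q : ℕ} (h : n * q ≤ d) (c c' : Fin n → Fin q) :
    hammingDist c c' ≤ hammingDist (vgEmb d n q c) (vgEmb d n q c') := by
  unfold hammingDist
  apply Finset.card_le_card_of_injOn
      (fun i : Fin n => (⟨(i:ℕ)*q + (c i : ℕ), vg_lt h i (c i)⟩ : Fin d))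
  · intro i hi
    simp only [coe_filter, Set.mem_setOf_eq, mem_coe, mem_filter, mem_univ, true_and] at hi ⊢
    intro heq
    have h1 : vgEmb d n q c ⟨(i:ℕ)*q + (c i : ℕ), vg_lt h i (c i)⟩ = true := by
      rw [vgEmb_true_iff]; exact ⟨i, rfl⟩
    rw [heq] at h1
    rw [vgEmb_true_iff] at h1
    obtain ⟨i', hi'⟩ := h1
    simp only at hi'
    have := congrArg (· / q) hi'
    simp only [vg_div] at this
    have hii' : i = i' := Fin.ext this
    subst hii'
    exact hi (Fin.ext (by omega))
  · intro i _ i' _ hii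
    have h2 : (i:ℕ) * q + (c i : ℕ) = (i':ℕ) * q + (c i' : ℕ) := by
      simpa [Fin.ext_iff] using hii
    have := congrArg (· / q) h2
    simp only [vg_div] at this
    exact Fin.ext this

lemma vg_fix_card {n q : ℕ} (v : Fin n → Fin q) (S : Finset (Fin n)) :
    (Finset.univ.filter fun x : Fin n → Fin q => ∀ j ∉ S, x j = v j).card ≤ q ^ S.card := by
  classical
  have : (Finset.univ.filter fun x : Fin n → Fin q => ∀ j ∉ S, x j = v j).card
      ≤ (Finset.univ : Finset ({j // j ∈ S} → Fin q)).card := by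
    apply Finset.card_le_card_of_injOn (fun x (j : {j // j ∈ S}) => x (j : Fin n))
    · intro x _; exact Finset.mem_univ _
    · intro x hx y hy hxy
      simp only [Finset.coe_filter, Set.mem_setOf_eq, mem_univ, true_and] at hx hy
      funext (j : Fin n)
      by_cases hj : j ∈ S
      · exact congrFun hxy ⟨j, hj⟩
      · rw [hx j hj, hy j hj]
    
  calc _ ≤ _ := this
  _ = q ^ S.card := by
      rw [Finset.card_univ, Fintype.card_fun, Fintype.card_coe, Fintype.card_fin]

lemma vg_ball {n q m : ℕ} (hm : m ≤ n) (v : Fin n → Fin q) :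
    (Finset.univ.filter fun x : Fin n → Fin q => hammingDist x v ≤ m).card
      ≤ n.choose m * q ^ m := by
  classical
  have hsub : (Finset.univ.filter fun x : Fin n → Fin q => hammingDist x v ≤ m)
      ⊆ (Finset.univ.powersetCard m).biUnion
          (fun S => Finset.univ.filter fun x : Fin n → Fin q => ∀ j ∉ S, x j = v j) := by
    intro x hx
    simp only [mem_filter, mem_univ, true_and] at hx
    obtain ⟨S, hDS, _, hScard⟩ := Finset.exists_subsuperset_card_eq
      (Finset.subset_univ (Finset.univ.filter fun i => x i ≠ v i)) hx (by simpa using hm)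
    simp only [mem_biUnion]
    refine ⟨S, ?_, ?_⟩
    · exact Finset.mem_powersetCard.mpr ⟨Finset.subset_univ S, hScard⟩
    · simp only [mem_filter, mem_univ, true_and]
      intro j hj
      by_contra hne
      exact hj (hDS (by simp [hne]))
  calc _ ≤ _ := Finset.card_le_card hsub
  _ ≤ ∑ S ∈ Finset.univ.powersetCard m, (Finset.univ.filter
        fun x : Fin n → Fin q => ∀ j ∉ S, x j = v j).card := Finset.card_biUnion_le
  _ ≤ ∑ S ∈ Finset.univ.powersetCard m, q ^ m := by
      apply Finset.sum_le_sum
      intro S hS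
      have : S.card = m := (Finset.mem_powersetCard.mp hS).2
      simpa [this] using vg_fix_card v S
  _ = n.choose m * q ^ m := by
      rw [Finset.sum_const, smul_eq_mul, Finset.card_powersetCard, Finset.card_univ,
        Fintype.card_fin]

lemma vg_pack {n q m : ℕ} (hm : m ≤ n) :
    ∃ A : Finset (Fin n → Fin q),
      (∀ x ∈ A, ∀ y ∈ A, x ≠ y → m + 1 ≤ hammingDist x y) ∧
      q ^ n ≤ A.card * (n.choose m * q ^ m) := by
  classical
  set P : Finset (Finset (Fin n → Fin q)) :=
    Finset.univ.filter (fun A => ∀ x ∈ A, ∀ y ∈ A, x ≠ y → m + 1 ≤ hammingDist x y) with hP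
  have hPne : P.Nonempty := ⟨∅, by simp [hP]⟩
  obtain ⟨A, hAP, hAmax⟩ := Finset.exists_max_image P Finset.card hPne
  have hApack : ∀ x ∈ A, ∀ y ∈ A, x ≠ y → m + 1 ≤ hammingDist x y :=
    (Finset.mem_filter.mp hAP).2
  refine ⟨A, hApack, ?_⟩
  have hcover : (Finset.univ : Finset (Fin n → Fin q)) ⊆
      A.biUnion (fun v => Finset.univ.filter fun x => hammingDist x v ≤ m) := by
    intro x _
    simp only [mem_biUnion, mem_filter, mem_univ, true_and]
    by_contra hc
    push_neg at hc
    have hxA : x ∉ A := by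
      intro hxA
      have := hc x hxA
      simp [hammingDist_self] at this
    have hins : insert x A ∈ P := by
      rw [hP, Finset.mem_filter]
      refine ⟨Finset.mem_univ _, ?_⟩
      intro a ha b hb hab
      rcases Finset.mem_insert.mp ha with ha' | ha' <;>
        rcases Finset.mem_insert.mp hb with hb' | hb'
      · exact absurd (ha'.trans hb'.symm) hab
      · subst ha'; exact hc b hb'
      · subst hb'; rw [hammingDist_comm]; exact hc a ha'
      · exact hApack a ha' b hb' hab
    have := hAmax _ hins
    rw [Finset.card_insert_of_notMem hxA] at this
    omega
  calc q ^ n = (Finset.univ : Finset (Fin n → Fin q)).card := by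
        rw [Finset.card_univ, Fintype.card_fun, Fintype.card_fin, Fintype.card_fin]
  _ ≤ (A.biUnion (fun v => Finset.univ.filter fun x => hammingDist x v ≤ m)).card :=
        Finset.card_le_card hcover
  _ ≤ ∑ v ∈ A, (Finset.univ.filter fun x => hammingDist x v ≤ m).card :=
        Finset.card_biUnion_le
  _ ≤ ∑ _v ∈ A, n.choose m * q ^ m := Finset.sum_le_sum fun v _ => vg_ball hm v
  _ = A.card * (n.choose m * q ^ m) := by rw [Finset.sum_const, smul_eq_mul]

lemma vg_choose {n m : ℕ} (hm : m ≤ n) :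
    (n.choose m : ℝ) ≤ 20 ^ m * (20 / 19 : ℝ) ^ n := by
  have hsum : ∑ k ∈ Finset.range (n+1),
      (1/20 : ℝ) ^ k * (19/20) ^ (n - k) * n.choose k = 1 := by
    rw [← add_pow]
    norm_num
  have hterm : (1/20 : ℝ) ^ m * (19/20) ^ (n - m) * n.choose m ≤ 1 := by
    have := Finset.single_le_sum (f := fun k => (1/20 : ℝ) ^ k * (19/20) ^ (n - k) * (n.choose k : ℝ))
      (fun k _ => by positivity) (Finset.mem_range.mpr (Nat.lt_succ_of_le hm))
    rw [hsum] at this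
    exact this
  have h1 : (n.choose m : ℝ) ≤ 20 ^ m * (20/19) ^ (n - m) := by
    have hp : (0:ℝ) < (1/20 : ℝ) ^ m * (19/20) ^ (n - m) := by positivity
    rw [← mul_le_mul_iff_right₀ hp]
    calc (1/20 : ℝ) ^ m * (19/20) ^ (n-m) * (n.choose m : ℝ) ≤ 1 := hterm
    _ = (1/20 : ℝ) ^ m * (19/20) ^ (n-m) * (20 ^ m * (20/19) ^ (n-m)) := by
        rw [mul_mul_mul_comm, ← mul_pow, ← mul_pow]
        norm_num
  calc (n.choose m : ℝ) ≤ 20 ^ m * (20/19) ^ (n - m) := h1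
  _ ≤ 20 ^ m * (20/19) ^ n := by
      have : ((20:ℝ)/19) ^ (n-m) ≤ (20/19) ^ n :=
        pow_le_pow_right₀ (by norm_num) (Nat.sub_le n m)
      have h20 : (0:ℝ) < 20 ^ m := by positivity
      nlinarith

set_option maxHeartbeats 1000000 in
/-- Sparse Varshamov–Gilbert lemma: there is a universal constant `C₀ > 0`
such that for all `d₀ ≤ d/2` there is a set `V` of binary vectors of weight
`d₀` with `log|V| ≥ C₀ d₀ log(d/d₀)` and pairwise Hamming distance
at least `C₀ d₀`. -/
theorem sparse_varshamov_gilbert :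
    ∃ C₀ > (0 : ℝ), ∀ d d₀ : ℕ, 0 < d₀ → 2 * d₀ ≤ d →
      ∃ V : Finset (Fin d → Bool),
        (∀ v ∈ V, (Finset.univ.filter fun j => v j = true).card = d₀) ∧
        C₀ * d₀ * Real.log ((d : ℝ) / d₀) ≤ Real.log V.card ∧
        ∀ v ∈ V, ∀ w ∈ V, v ≠ w → C₀ * d₀ ≤ (hammingDist v w : ℝ) := by
  classical
  refine ⟨1/20, by norm_num, ?_⟩
  intro d n hd₀ hdd
  set q := d / n with hqdef
  have hq2 : 2 ≤ q := (Nat.le_div_iff_mul_le hd₀).mpr (by omega)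
  have hnq : n * q ≤ d := by rw [hqdef, mul_comm]; exact Nat.div_mul_le_self d n
  have hdn : d < n * q + n := by
    have h1 := Nat.div_add_mod d n
    have h2 := Nat.mod_lt d hd₀
    rw [hqdef]
    omega
  clear_value q
  clear hqdef
  set m := n / 20 with hmdef
  have hmn : m ≤ n := Nat.div_le_self _ _
  have hm20 : n < 20 * (m + 1) := by
    have h1 := Nat.div_add_mod n 20
    have h2 := Nat.mod_lt n (show 0 < 20 by norm_num)
    rw [hmdef]
    omega
  have hmR : (m:ℝ) ≤ (n:ℝ) / 20 := by
    rw [hmdef]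
    exact_mod_cast Nat.cast_div_le
  clear_value m
  clear hmdef
  obtain ⟨A, hApack, hAcount⟩ := vg_pack (n := n) (q := q) hmn
  have hinj : Function.Injective (vgEmb d n q) := by
    intro c c' hcc
    have h1 := vg_dist hnq c c'
    rw [hcc, hammingDist_self, Nat.le_zero, hammingDist_eq_zero] at h1
    exact h1
  refine ⟨A.image (vgEmb d n q), ?_, ?_, ?_⟩
  · intro v hv
    obtain ⟨c, _, rfl⟩ := Finset.mem_image.mp hv
    exact vg_weight hnq c
  · -- log cardinality bound
    rw [Finset.card_image_of_injective _ hinj]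
    obtain ⟨K, hK⟩ : ∃ K, K = A.card := ⟨_, rfl⟩
    obtain ⟨C, hC⟩ : ∃ C, C = n.choose m := ⟨_, rfl⟩
    rw [← hK, ← hC] at hAcount
    rw [← hK]
    have hCpos : 0 < C := hC ▸ Nat.choose_pos hmn
    have hqn : 0 < q ^ n := Nat.pow_pos (by omega)
    have hKpos : 0 < K := by
      rcases Nat.eq_zero_or_pos K with h | h
      · rw [h, Nat.zero_mul] at hAcount; omega
      · exact h
    have hqR : (2:ℝ) ≤ (q:ℝ) := by exact_mod_cast hq2
    have hcount : ((q:ℝ)) ^ (n - m) ≤ (K:ℝ) * (C:ℝ) := by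
      have hRc : ((q:ℝ)) ^ n ≤ (K:ℝ) * ((C:ℝ) * (q:ℝ) ^ m) := by exact_mod_cast hAcount
      have h0 : ((q:ℝ)) ^ (n - m) * (q:ℝ) ^ m ≤ ((K:ℝ) * (C:ℝ)) * (q:ℝ) ^ m := by
        rw [← pow_add, Nat.sub_add_cancel hmn]
        nlinarith [hRc]
      have hqm : (0:ℝ) < (q:ℝ) ^ m := by positivity
      exact le_of_mul_le_mul_right h0 hqm
    have hlogKC : ((n - m : ℕ) : ℝ) * Real.log q ≤ Real.log K + Real.log C := by
      rw [← Real.log_pow, ← Real.log_mul (by positivity) (by positivity)]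
      apply Real.log_le_log (by positivity) hcount
    have hlogC : Real.log C ≤ (m:ℝ) * Real.log 20 + (n:ℝ) * Real.log (20/19) := by
      calc Real.log C ≤ Real.log ((20:ℝ) ^ m * (20/19) ^ n) := by
            apply Real.log_le_log (by exact_mod_cast hCpos)
            rw [hC]; exact vg_choose hmn
      _ = (m:ℝ) * Real.log 20 + (n:ℝ) * Real.log (20/19) := by
            rw [Real.log_mul (by positivity) (by positivity), Real.log_pow, Real.log_pow]
    have hlog2 : (0.6931:ℝ) ≤ Real.log 2 := by
      have := Real.log_two_gt_d9; linarith
    have hlogq : Real.log 2 ≤ Real.log q := Real.log_le_log (by norm_num) (by linarith)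
    have hlogq0 : (0:ℝ) ≤ Real.log q := by linarith
    have hlog20 : Real.log 20 ≤ 5 * Real.log 2 := by
      calc Real.log 20 ≤ Real.log (2^5) := Real.log_le_log (by norm_num) (by norm_num)
      _ = 5 * Real.log 2 := by rw [Real.log_pow]; norm_num
    have hlog200 : (0:ℝ) ≤ Real.log 20 := Real.log_nonneg (by norm_num)
    have hloge : Real.log (20/19 : ℝ) ≤ 1/19 := by
      have := Real.log_le_sub_one_of_pos (show (0:ℝ) < 20/19 by norm_num)
      linarith
    have hL : Real.log ((d:ℝ)/n) ≤ 2 * Real.log q := by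
      have hq1 : q + 1 ≤ q * q := by nlinarith
      have hdq2 : d ≤ q * q * n := by
        calc d ≤ n * q + n := le_of_lt hdn
        _ = n * (q + 1) := by ring
        _ ≤ n * (q * q) := Nat.mul_le_mul_left _ hq1
        _ = q * q * n := by ring
      have hdq : (d:ℝ) / n ≤ (q:ℝ) ^ 2 := by
        rw [div_le_iff₀ (by exact_mod_cast hd₀)]
        have h5 : (d:ℝ) ≤ (q:ℝ) * (q:ℝ) * (n:ℝ) := by exact_mod_cast hdq2
        nlinarith [h5]
      calc Real.log ((d:ℝ)/n) ≤ Real.log ((q:ℝ)^2) := by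
            apply Real.log_le_log _ hdq
            apply div_pos (by exact_mod_cast (show 0 < d by omega)) (by exact_mod_cast hd₀)
      _ = 2 * Real.log q := by rw [Real.log_pow]; norm_num
    have hL0 : (0:ℝ) ≤ Real.log ((d:ℝ)/n) := by
      apply Real.log_nonneg
      rw [le_div_iff₀ (by exact_mod_cast hd₀)]
      have : (n:ℝ) ≤ (d:ℝ) := by exact_mod_cast (by omega : n ≤ d)
      linarith
    have hnmR : ((n - m : ℕ) : ℝ) = (n:ℝ) - (m:ℝ) := Nat.cast_sub hmn
    have hm0 : (0:ℝ) ≤ (m:ℝ) := by positivity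
    have hn1 : (1:ℝ) ≤ (n:ℝ) := by exact_mod_cast hd₀
    rw [hnmR] at hlogKC
    -- final arithmetic
    have key : (1/20 : ℝ) * n * Real.log ((d:ℝ)/n) ≤ (1/10) * n * Real.log q := by
      nlinarith [mul_le_mul_of_nonneg_left hL (show (0:ℝ) ≤ (1/20) * n by positivity)]
    apply le_trans key
    nlinarith [mul_le_mul_of_nonneg_right hmR hlog200,
      mul_le_mul_of_nonneg_right hmR hlogq0,
      mul_le_mul_of_nonneg_left hlog20 (show (0:ℝ) ≤ (n:ℝ)/20 by positivity),
      mul_le_mul_of_nonneg_left hloge (show (0:ℝ) ≤ (n:ℝ) by positivity),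
      mul_le_mul_of_nonneg_left hlogq (show (0:ℝ) ≤ (n:ℝ) by positivity),
      hlogKC, hlogC]
  · -- distance
    intro v hv w hw hvw
    obtain ⟨c, hcA, rfl⟩ := Finset.mem_image.mp hv
    obtain ⟨c', hc'A, rfl⟩ := Finset.mem_image.mp hw
    have hcc : c ≠ c' := fun h => hvw (by rw [h])
    have h1 := hApack c hcA c' hc'A hcc
    have h2 := vg_dist hnq c c'
    have h3 : (m:ℝ) + 1 ≤ (hammingDist (vgEmb d n q c) (vgEmb d n q c') : ℝ) := by
      exact_mod_cast le_trans h1 h2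
    have h4 : (n:ℝ) / 20 < (m:ℝ) + 1 := by
      have h5 : (n:ℝ) < 20 * ((m:ℝ) + 1) := by exact_mod_cast hm20
      linarith
    calc (1/20 : ℝ) * n = (n:ℝ)/20 := by ring
    _ ≤ (m:ℝ) + 1 := le_of_lt h4
    _ ≤ _ := h3
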